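/- Let N be a finite nonempty player set, (N, a) a convex TU-game, and x : N → ℝ a vector satisfying x(S) ≥ a(S) for all S ⊆ N. Then the collection of tight coalitions {S ⊆ N : x(S) = a(S)} is closed under union and intersection: if x(S) = a(S) and x(T) = a(T), then x(S ∪ T) = a(S ∪ T) and x(S ∩ T) = a(S ∩ T). -/
import Mathlib

/-- A TU-game `v` is convex. -/
def IsConvexGame {N : Type*} [Fintype N] [DecidableEq N] (v : Finset N → ℝ) : Prop :=
  ∀ S T : Finset N, v S + v T ≤ v (S ∪ T) + v (S ∩ T)

/-- For a convex game `a` and a vector `x` dominating `a` on all coalitions, the family of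
tight coalitions is closed under unions and intersections. -/
theorem tight_coalitions_closed {N : Type*} [Fintype N] [DecidableEq N] [Nonempty N]
    (a : Finset N → ℝ) (ha0 : a ∅ = 0) (hconv : IsConvexGame a)
    (x : N → ℝ) (hx : ∀ S : Finset N, a S ≤ ∑ i ∈ S, x i)
    (S T : Finset N) (hS : ∑ i ∈ S, x i = a S) (hT : ∑ i ∈ T, x i = a T) :
    (∑ i ∈ S ∪ T, x i = a (S ∪ T)) ∧ (∑ i ∈ S ∩ T, x i = a (S ∩ T)) := by
  have hsum : (∑ i ∈ S ∪ T, x i) + (∑ i ∈ S ∩ T, x i)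
      = (∑ i ∈ S, x i) + (∑ i ∈ T, x i) := Finset.sum_union_inter
  have h1 := hx (S ∪ T)
  have h2 := hx (S ∩ T)
  have hc := hconv S T
  constructor <;> linarith
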